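/- Let (x_n), (y_n) be sequences in D(I) converging in the J_1 topology to x and y respectively, where x and y have no common discontinuity points (Disc(x) ∩ Disc(y) = ∅). Then x_n + y_n converges to x + y in the J_1 topology. -/

import Mathlib

open MeasureTheory ProbabilityTheory Filter Set

/-- `x : ℝ → ℝ` is càdlàg on the compact interval `[a,b]`: right-continuous on `[a,b)` and
with left limits on `(a,b]`. -/
def CadlagOn (a b : ℝ) (x : ℝ → ℝ) : Prop :=
  (∀ t ∈ Set.Ico a b, Filter.Tendsto x (nhdsWithin t (Set.Ioi t)) (nhds (x t))) ∧
  (∀ t ∈ Set.Ioc a b, ∃ L : ℝ, Filter.Tendsto x (nhdsWithin t (Set.Iio t)) (nhds L))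

/-- A time change of `[a,b]`: a continuous, strictly increasing map of `[a,b]` onto itself. -/
def TimeChange (a b : ℝ) (l : ℝ → ℝ) : Prop :=
  ContinuousOn l (Set.Icc a b) ∧ StrictMonoOn l (Set.Icc a b) ∧
    l a = a ∧ l b = b ∧ Set.MapsTo l (Set.Icc a b) (Set.Icc a b)

/-- Skorokhod's `J_1` distance on `D([a,b])`. -/
noncomputable def J1dist (a b : ℝ) (x y : ℝ → ℝ) : ℝ :=
  sInf { r : ℝ | 0 ≤ r ∧ ∃ l : ℝ → ℝ, TimeChange a b l ∧
    ∀ t ∈ Set.Icc a b, |l t - t| ≤ r ∧ |x t - y (l t)| ≤ r }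

/-- Continuity of a functional `F : D([a,b]) → ℝ` at `x` with respect to the `J_1` distance. -/
def J1ContinuousAt (a b : ℝ) (F : (ℝ → ℝ) → ℝ) (x : ℝ → ℝ) : Prop :=
  ∀ ε : ℝ, 0 < ε → ∃ δ : ℝ, 0 < δ ∧ ∀ y : ℝ → ℝ, CadlagOn a b y →
    J1dist a b x y < δ → |F y - F x| < ε

/-- Weak convergence of `D([a,b])`-valued random elements in the `J_1` topology: convergence
of expectations of bounded `J_1`-continuous functionals. -/
def WeakConvJ1 {Ω : Type*} [MeasurableSpace Ω] (μ : Measure Ω) (a b : ℝ)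
    (X : ℕ → Ω → ℝ → ℝ) (X₀ : Ω → ℝ → ℝ) : Prop :=
  ∀ F : (ℝ → ℝ) → ℝ, (∃ C : ℝ, ∀ x, |F x| ≤ C) →
    (∀ x, CadlagOn a b x → J1ContinuousAt a b F x) →
    Tendsto (fun n => ∫ ω, F (X n ω) ∂μ) atTop (nhds (∫ ω, F (X₀ ω) ∂μ))

/-- The set of discontinuity points (within `[a,b]`) of a function `x`. -/
def DiscOn (a b : ℝ) (x : ℝ → ℝ) : Set ℝ :=
  {t | t ∈ Set.Icc a b ∧ ¬ ContinuousWithinAt x (Set.Icc a b) t}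

/-! Fix `η > 0`. Each of `x`, `y` has only finitely many jumps of size `≥ η`, and no such jump
is shared. Let `lx`, `ly` be time changes bringing `xs n` close to `x` and `ys n` close to `y`.
Since the large jumps are well separated and `lx`, `ly` are close to the identity, a single
piecewise linear time change `l` can be chosen to hit each large jump of `x` at the same point
as `lx`, and each large jump of `y` at the same point as `ly`. Then no large jump of `x` lies
between `lx t` and `l t`, so `x` varies by `O(η)` there, likewise for `y`, and `l` brings
`xs n + ys n` close to `x + y`. -/

open Topology Function

def largeJumps (a b : ℝ) (x : ℝ → ℝ) (η : ℝ) : Set ℝ :=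
  {q | q ∈ Ioc a b ∧ η ≤ |x q - leftLim x q|}

namespace CadlagOn

variable {a b : ℝ} {x : ℝ → ℝ}

lemma tendsto_leftLim (hx : CadlagOn a b x) {t : ℝ} (ht : t ∈ Ioc a b) :
    Tendsto x (𝓝[<] t) (𝓝 (leftLim x t)) := by
  obtain ⟨L, hL⟩ := hx.2 t ht
  rwa [leftLim_eq_of_tendsto hL]

lemma abs_leftLim_sub_le (hx : CadlagOn a b x) {p q c ε : ℝ} (hq : q ∈ Ioc a b) (hpq : p < q)
    (h : ∀ s ∈ Ioo p q, |x s - c| ≤ ε) : |leftLim x q - c| ≤ ε :=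
  le_of_tendsto ((hx.tendsto_leftLim hq).sub_const c).abs
    (Filter.mem_of_superset (Ioo_mem_nhdsLT hpq) h)

lemma exists_abs_sub_le_near (hx : CadlagOn a b x) {t ε : ℝ} (ht : t ∈ Icc a b) (hε : 0 < ε) :
    ∃ τ > 0, ∀ s ∈ Icc a b, |s - t| < τ →
      (t ≤ s → |x s - x t| ≤ ε) ∧ (s < t → |x s - leftLim x t| ≤ ε) := by
  have hright : ∀ᶠ s in 𝓝[≥] t, s ∈ Icc a b → |x s - x t| ≤ ε := by
    rcases ht.2.eq_or_lt with rfl | htb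
    · filter_upwards [self_mem_nhdsWithin] with s hts hs
      rw [le_antisymm hs.2 hts, sub_self, abs_zero]
      exact hε.le
    · have hcont := continuousWithinAt_Ioi_iff_Ici.1 (hx.1 t ⟨ht.1, htb⟩)
      filter_upwards [Metric.tendsto_nhds.1 hcont ε hε] with s hs _
      exact hs.le
  have hleft : ∀ᶠ s in 𝓝[<] t, s ∈ Icc a b → |x s - leftLim x t| ≤ ε := by
    rcases ht.1.eq_or_lt with rfl | hat
    · filter_upwards [self_mem_nhdsWithin] with s hst hs
      exact absurd hs.1 (not_le.2 hst)
    · filter_upwards [Metric.tendsto_nhds.1 (hx.tendsto_leftLim ⟨hat, ht.2⟩) ε hε] with s hs _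
      exact hs.le
  have hnhds : ∀ᶠ s in 𝓝 t, s ∈ Icc a b →
      (t ≤ s → |x s - x t| ≤ ε) ∧ (s < t → |x s - leftLim x t| ≤ ε) := by
    rw [← nhdsLT_sup_nhdsGE, eventually_sup]
    constructor
    · filter_upwards [hleft, self_mem_nhdsWithin] with s h hst hs
      exact ⟨fun hts => absurd hst (not_lt.2 hts), fun _ => h hs⟩
    · filter_upwards [hright, self_mem_nhdsWithin] with s h hts hs
      exact ⟨fun _ => h hs, fun hst => absurd hst (not_lt.2 hts)⟩
  obtain ⟨τ, hτ, h⟩ := Metric.eventually_nhds_iff.1 hnhds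
  exact ⟨τ, hτ, fun s hs hst => h (by rwa [Real.dist_eq]) hs⟩

lemma exists_abs_le (hx : CadlagOn a b x) : ∃ M, ∀ t ∈ Icc a b, |x t| ≤ M := by
  refine isCompact_Icc.induction_on (p := fun S => ∃ M, ∀ t ∈ S, |x t| ≤ M)
    ⟨0, fun _ h => h.elim⟩ (fun S T hST ⟨M, hM⟩ => ⟨M, fun t ht => hM t (hST ht)⟩)
    (fun S T ⟨M, hM⟩ ⟨N, hN⟩ => ⟨max M N, ?_⟩) (fun t ht => ?_)
  · rintro s (hs | hs)
    exacts [(hM s hs).trans (le_max_left M N), (hN s hs).trans (le_max_right M N)]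
  · obtain ⟨τ, hτ, h⟩ := hx.exists_abs_sub_le_near ht one_pos
    refine ⟨Icc a b ∩ Metric.ball t τ,
      inter_mem_nhdsWithin _ (Metric.ball_mem_nhds t hτ), max |x t| |leftLim x t| + 1, ?_⟩
    rintro s ⟨hs, hst⟩
    obtain ⟨hr, hl⟩ := h s hs (by rwa [Metric.mem_ball, Real.dist_eq] at hst)
    rcases le_or_gt t s with hts | hst
    · have := abs_sub_abs_le_abs_sub (x s) (x t)
      linarith [hr hts, le_max_left |x t| |leftLim x t|]
    · have := abs_sub_abs_le_abs_sub (x s) (leftLim x t)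
      linarith [hl hst, le_max_right |x t| |leftLim x t|]

lemma exists_ball_abs_sub_leftLim_le (hx : CadlagOn a b x) {t ε : ℝ} (ht : t ∈ Icc a b)
    (hε : 0 < ε) :
    ∃ τ > 0, ∀ q ∈ Ioc a b, |q - t| < τ → q ≠ t → |x q - leftLim x q| ≤ 2 * ε := by
  obtain ⟨τ, hτ, h⟩ := hx.exists_abs_sub_le_near ht hε
  refine ⟨τ, hτ, fun q hq hqτ hne => ?_⟩
  have hIcc : ∀ s, a ≤ s → s ≤ q → s ∈ Icc a b := fun s has hsq => ⟨has, hsq.trans hq.2⟩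
  have hqτ' := abs_lt.1 hqτ
  have key : ∀ c, |x q - c| ≤ ε → |leftLim x q - c| ≤ ε → |x q - leftLim x q| ≤ 2 * ε :=
    fun c h₁ h₂ => (abs_sub_le _ c _).trans (by rw [abs_sub_comm c]; linarith)
  rcases hne.lt_or_gt with hqt | htq
  · refine key _ ((h q (hIcc q hq.1.le le_rfl) hqτ).2 hqt) (hx.abs_leftLim_sub_le hq
      (max_lt hq.1 (by linarith) : max a (t - τ) < q) fun s hs => ?_)
    have hs₁ := max_lt_iff.1 hs.1
    exact (h s (hIcc s hs₁.1.le hs.2.le) (abs_lt.2 ⟨by linarith, by linarith [hs.2]⟩)).2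
      (hs.2.trans hqt)
  · refine key _ ((h q (hIcc q hq.1.le le_rfl) hqτ).1 htq.le)
      (hx.abs_leftLim_sub_le hq htq fun s hs => ?_)
    have hts : t ≤ s := hs.1.le
    exact (h s (hIcc s (ht.1.trans hts) hs.2.le)
      (abs_lt.2 ⟨by linarith, by linarith [hs.2]⟩)).1 hts

lemma finite_largeJumps (hx : CadlagOn a b x) {η : ℝ} (hη : 0 < η) :
    (largeJumps a b x η).Finite := by
  have hJ : largeJumps a b x η ⊆ Icc a b := fun q hq => Ioc_subset_Icc_self hq.1
  rw [← inter_eq_right.2 hJ]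
  refine isCompact_Icc.induction_on (p := fun S => (S ∩ largeJumps a b x η).Finite) (by simp)
    (fun S T hST hT => hT.subset (inter_subset_inter_left _ hST))
    (fun S T hS hT => by rw [union_inter_distrib_right]; exact hS.union hT) (fun t ht => ?_)
  obtain ⟨τ, hτ, h⟩ := hx.exists_ball_abs_sub_leftLim_le ht (by positivity : 0 < η / 3)
  refine ⟨Metric.ball t τ, mem_nhdsWithin_of_mem_nhds (Metric.ball_mem_nhds t hτ),
    (finite_singleton t).subset fun q ⟨hqt, hq, hbig⟩ => ?_⟩
  by_contra hne
  have := h q hq (by rwa [Metric.mem_ball, Real.dist_eq] at hqt) hne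
  linarith

lemma largeJumps_subset_discOn (hx : CadlagOn a b x) {η : ℝ} (hη : 0 < η) :
    largeJumps a b x η ⊆ DiscOn a b x := by
  rintro q ⟨hq, hbig⟩
  refine ⟨Ioc_subset_Icc_self hq, fun hcont => ?_⟩
  have hleft : 𝓝[<] q ≤ 𝓝[Icc a b] q := by
    rw [← nhdsWithin_Ioo_eq_nhdsLT hq.1]
    exact nhdsWithin_mono q fun s hs => ⟨hs.1.le, hs.2.le.trans hq.2⟩
  rw [tendsto_nhds_unique (hx.tendsto_leftLim hq) (hcont.tendsto.mono_left hleft), sub_self,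
    abs_zero] at hbig
  exact hη.not_ge hbig

lemma exists_abs_sub_le_of_disjoint_largeJumps (hx : CadlagOn a b x) {η : ℝ} (hη : 0 < η) :
    ∃ δ > 0, ∀ u ∈ Icc a b, ∀ v ∈ Icc a b, |u - v| < δ →
      Disjoint (uIoc u v) (largeJumps a b x η) → |x u - x v| ≤ 3 * η := by
  choose! τ hτ h using fun t (ht : t ∈ Icc a b) => hx.exists_abs_sub_le_near ht hη
  obtain ⟨δ, hδ, hball⟩ := lebesgue_number_lemma_of_metric isCompact_Icc
    (c := fun t : Icc a b => Metric.ball (t : ℝ) (τ t)) (fun _ => Metric.isOpen_ball)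
    (fun s hs => mem_iUnion.2 ⟨⟨s, hs⟩, Metric.mem_ball_self (hτ s hs)⟩)
  refine ⟨δ, hδ, fun u hu v hv huv hdisj => ?_⟩
  wlog hle : u ≤ v generalizing u v
  · rw [abs_sub_comm]
    exact this v hv u hu (by rwa [abs_sub_comm]) (by rwa [uIoc_comm]) (le_of_not_ge hle)
  obtain ⟨⟨t, ht⟩, hsub⟩ := hball u hu
  have hutτ : |u - t| < τ t := by
    simpa [Real.dist_eq] using hsub (Metric.mem_ball_self hδ)
  have hvtτ : |v - t| < τ t := by
    simpa [Real.dist_eq] using hsub (by rwa [Metric.mem_ball, Real.dist_eq, abs_sub_comm])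
  obtain ⟨hur, hul⟩ := h t ht u hu hutτ
  obtain ⟨hvr, hvl⟩ := h t ht v hv hvtτ
  rcases le_or_gt t u with htu | hut
  · linarith [abs_sub_le (x u) (x t) (x v), hur htu, hvr (htu.trans hle),
      abs_sub_comm (x t) (x v)]
  rcases le_or_gt t v with htv | hvt
  · have hsmall : |x t - leftLim x t| < η := by
      by_contra hbig
      refine disjoint_left.1 hdisj (by rw [uIoc_of_le hle]; exact ⟨hut, htv⟩)
        ⟨⟨hu.1.trans_lt hut, htv.trans hv.2⟩, not_lt.1 hbig⟩
    linarith [abs_sub_le (x u) (leftLim x t) (x v), abs_sub_le (leftLim x t) (x t) (x v),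
      hul hut, hvr htv, abs_sub_comm (leftLim x t) (x t), abs_sub_comm (x t) (x v)]
  · linarith [abs_sub_le (x u) (leftLim x t) (x v), hul hut, hvl hvt,
      abs_sub_comm (leftLim x t) (x v)]

end CadlagOn

section TimeChange

variable {a b : ℝ}

lemma timeChange_id : TimeChange a b id :=
  ⟨continuousOn_id, strictMono_id.strictMonoOn _, rfl, rfl, mapsTo_id _⟩

lemma TimeChange.surjOn (hab : a ≤ b) {l : ℝ → ℝ} (hl : TimeChange a b l) :
    SurjOn l (Icc a b) (Icc a b) := by
  simpa only [SurjOn, hl.2.2.1, hl.2.2.2.1] using intermediate_value_Icc hab hl.1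

lemma TimeChange.disjoint_uIoc {l l' : ℝ → ℝ} (hl : TimeChange a b l) (hl' : TimeChange a b l')
    {J : Set ℝ} (hJ : ∀ q ∈ J, ∃ s ∈ Icc a b, l s = q ∧ l' s = q) {t : ℝ} (ht : t ∈ Icc a b) :
    Disjoint (uIoc (l t) (l' t)) J := by
  refine disjoint_right.2 fun q hq hqI => ?_
  obtain ⟨s, hs, rfl, hs'⟩ := hJ q hq
  rcases le_or_gt s t with hst | hts
  · have h₁ := hl.2.1.monotoneOn hs ht hst
    have h₂ := hl'.2.1.monotoneOn hs ht hst
    rcases mem_uIoc.1 hqI with h | h <;> linarith [h.1, h.2]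
  · have h₁ := hl.2.1 ht hs hts
    have h₂ := hl'.2.1 ht hs hts
    rcases mem_uIoc.1 hqI with h | h <;> linarith [h.1, h.2]

end TimeChange

section J1dist

variable {a b : ℝ} {u v : ℝ → ℝ}

lemma J1dist_nonneg : 0 ≤ J1dist a b u v :=
  Real.sInf_nonneg fun _ hr => hr.1

lemma J1dist_le {r : ℝ} (hr : 0 ≤ r) {l : ℝ → ℝ} (hl : TimeChange a b l)
    (h : ∀ t ∈ Icc a b, |l t - t| ≤ r ∧ |u t - v (l t)| ≤ r) : J1dist a b u v ≤ r :=
  csInf_le ⟨0, fun _ hr => hr.1⟩ ⟨hr, l, hl, h⟩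

lemma exists_timeChange_of_J1dist_lt (hu : ∃ M, ∀ t ∈ Icc a b, |u t| ≤ M)
    (hv : ∃ M, ∀ t ∈ Icc a b, |v t| ≤ M) {δ : ℝ} (h : J1dist a b u v < δ) :
    ∃ l, TimeChange a b l ∧ ∀ t ∈ Icc a b, |l t - t| ≤ δ ∧ |u t - v (l t)| ≤ δ := by
  obtain ⟨M, hM⟩ := hu
  obtain ⟨N, hN⟩ := hv
  have hne : Set.Nonempty {r : ℝ | 0 ≤ r ∧ ∃ l : ℝ → ℝ, TimeChange a b l ∧
      ∀ t ∈ Icc a b, |l t - t| ≤ r ∧ |u t - v (l t)| ≤ r} := by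
    refine ⟨max 0 (M + N), le_max_left _ _, id, timeChange_id, fun t ht => ⟨?_, ?_⟩⟩
    · simp
    · exact ((abs_sub _ _).trans (add_le_add (hM t ht) (hN t ht))).trans (le_max_right _ _)
  obtain ⟨r, ⟨-, l, hl, hlr⟩, hrδ⟩ := exists_lt_of_csInf_lt hne h
  exact ⟨l, hl, fun t ht => ⟨(hlr t ht).1.trans hrδ.le, (hlr t ht).2.trans hrδ.le⟩⟩

end J1dist

section PiecewiseLinear

def NodesIncreasing (L : List (ℝ × ℝ)) : Prop :=
  L.Pairwise fun p q => p.1 < q.1 ∧ p.2 < q.2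

noncomputable def pwLinear : List (ℝ × ℝ) → ℝ → ℝ
  | [], t => t
  | [p], t => t - p.1 + p.2
  | p :: q :: r, t =>
      if t ≤ q.1 then p.2 + (t - p.1) * (q.2 - p.2) / (q.1 - p.1) else pwLinear (q :: r) t

lemma pwLinear_fst :
    ∀ {L : List (ℝ × ℝ)}, NodesIncreasing L →
      ∀ p ∈ L, pwLinear L p.1 = p.2
  | [], _, _, hp => absurd hp List.not_mem_nil
  | [_], _, p, hp => by rw [List.mem_singleton.1 hp, pwLinear]; ring
  | p₀ :: q :: r, hL, p, hp => by
      have hpq := (List.pairwise_cons.1 hL).1 q (by simp)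
      rcases List.mem_cons.1 hp with rfl | hp
      · simp [pwLinear, hpq.1.le]
      rcases List.mem_cons.1 hp with rfl | hr
      · rw [pwLinear, if_pos le_rfl]
        field_simp [sub_ne_zero.2 hpq.1.ne']
        ring
      · have hqp := ((List.pairwise_cons.1 (List.pairwise_cons.1 hL).2).1 p hr).1
        rw [pwLinear, if_neg (not_le.2 hqp)]
        exact pwLinear_fst (List.pairwise_cons.1 hL).2 p hp

lemma pwLinear_strictMono :
    ∀ {L : List (ℝ × ℝ)}, NodesIncreasing L →
      StrictMono (pwLinear L)
  | [], _ => strictMono_id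
  | [_], _ => fun s t hst => by simp only [pwLinear]; linarith
  | p :: q :: r, hL => by
      have hpq := (List.pairwise_cons.1 hL).1 q (by simp)
      have hd : 0 < q.1 - p.1 := sub_pos.2 hpq.1
      have hslope : 0 < (q.2 - p.2) / (q.1 - p.1) := div_pos (sub_pos.2 hpq.2) hd
      have hq : pwLinear (q :: r) q.1 = q.2 := pwLinear_fst (List.pairwise_cons.1 hL).2 q (by simp)
      have ih := pwLinear_strictMono (List.pairwise_cons.1 hL).2
      intro s t hst
      simp only [pwLinear]
      split_ifs with hs ht ht'
      · rw [mul_div_assoc, mul_div_assoc]; nlinarith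
      · have : (s - p.1) * (q.2 - p.2) / (q.1 - p.1) ≤ q.2 - p.2 := by
          rw [div_le_iff₀ hd]; nlinarith
        linarith [hq ▸ ih (not_le.1 ht)]
      · exact absurd (hst.le.trans ht') hs
      · exact ih hst

lemma pwLinear_continuous :
    ∀ {L : List (ℝ × ℝ)}, NodesIncreasing L →
      Continuous (pwLinear L)
  | [], _ => continuous_id
  | [_], _ => by simp only [pwLinear]; fun_prop
  | p :: q :: r, hL => by
      have hpq := (List.pairwise_cons.1 hL).1 q (by simp)
      have hq : pwLinear (q :: r) q.1 = q.2 := pwLinear_fst (List.pairwise_cons.1 hL).2 q (by simp)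
      simp only [pwLinear]
      refine Continuous.if_le (by fun_prop) (pwLinear_continuous (List.pairwise_cons.1 hL).2)
        continuous_id continuous_const fun t ht => ?_
      rw [ht, hq]
      field_simp [sub_ne_zero.2 hpq.1.ne']
      ring

/-- On each segment `pwLinear L t - t` is affine, hence between its values at the two nodes. -/
lemma abs_pwLinear_sub_le {c : ℝ} :
    ∀ {p₀ : ℝ × ℝ} {L : List (ℝ × ℝ)}, NodesIncreasing (p₀ :: L) →
      (∀ p ∈ p₀ :: L, |p.2 - p.1| ≤ c) → ∀ t, p₀.1 ≤ t → |pwLinear (p₀ :: L) t - t| ≤ c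
  | p₀, [], _, hc, t, _ => by
      simpa [pwLinear, show t - p₀.1 + p₀.2 - t = p₀.2 - p₀.1 by ring] using hc p₀ (by simp)
  | p, q :: r, hL, hc, t, hpt => by
      have hd : 0 < q.1 - p.1 := sub_pos.2 ((List.pairwise_cons.1 hL).1 q (by simp)).1
      simp only [pwLinear]
      split_ifs with htq
      · have hsub : p.2 + (t - p.1) * (q.2 - p.2) / (q.1 - p.1) - t
            = ((q.1 - t) * (p.2 - p.1) + (t - p.1) * (q.2 - q.1)) / (q.1 - p.1) := by
          field_simp
          ring
        rw [hsub, abs_div, abs_of_pos hd, div_le_iff₀ hd]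
        calc |(q.1 - t) * (p.2 - p.1) + (t - p.1) * (q.2 - q.1)|
            ≤ (q.1 - t) * |p.2 - p.1| + (t - p.1) * |q.2 - q.1| := by
              refine (abs_add_le _ _).trans ?_
              rw [abs_mul, abs_mul, abs_of_nonneg (sub_nonneg.2 htq),
                abs_of_nonneg (sub_nonneg.2 hpt)]
          _ ≤ (q.1 - t) * c + (t - p.1) * c := by
              gcongr
              exacts [hc p (by simp), hc q (by simp)]
          _ = c * (q.1 - p.1) := by ring
      · exact abs_pwLinear_sub_le (List.pairwise_cons.1 hL).2
          (fun p' hp' => hc p' (List.mem_cons_of_mem _ hp')) t (not_le.1 htq).le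

end PiecewiseLinear

section Matching

variable {a b : ℝ}

lemma TimeChange.apply_eq_self_of_notMem_Ioo {l : ℝ → ℝ} (hl : TimeChange a b l) {q : ℝ}
    (hq : q ∈ Icc a b) (hq' : q ∉ Ioo a b) : l q = q := by
  rcases eq_endpoints_or_mem_Ioo_of_mem_Icc hq with rfl | rfl | h
  exacts [hl.2.2.1, hl.2.2.2.1, absurd h hq']

lemma TimeChange.mem_Ioo_of_apply_mem_Ioo {l : ℝ → ℝ} (hl : TimeChange a b l) {s : ℝ}
    (hs : s ∈ Icc a b) (h : l s ∈ Ioo a b) : s ∈ Ioo a b :=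
  ⟨hs.1.lt_of_ne (by rintro rfl; exact h.1.ne' hl.2.2.1),
    hs.2.lt_of_ne (by rintro rfl; exact h.2.ne hl.2.2.2.1)⟩

lemma exists_timeChange_of_nodes (hab : a < b) {S : Finset ℝ} (hS : ↑S ⊆ Ioo a b)
    {σ : ℝ → ℝ} (hσS : MapsTo σ S (Ioo a b)) (hσ : StrictMonoOn σ S) {δ : ℝ} (hδ : 0 ≤ δ)
    (hσδ : ∀ q ∈ S, |q - σ q| ≤ δ) :
    ∃ l, TimeChange a b l ∧ (∀ t ∈ Icc a b, |l t - t| ≤ δ) ∧ ∀ q ∈ S, l (σ q) = q := by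
  set L : List (ℝ × ℝ) := (a, a) :: (S.sort.map (fun q => (σ q, q)) ++ [(b, b)])
  have hL : NodesIncreasing L := by
    have hsort := S.sortedLT_sort.pairwise
    refine List.pairwise_cons.2 ⟨?_, List.pairwise_append.2 ⟨?_, List.pairwise_singleton _ _, ?_⟩⟩
    · simp only [List.mem_append, List.mem_map, Finset.mem_sort, List.mem_singleton]
      rintro p (⟨q, hq, rfl⟩ | rfl)
      exacts [⟨(hσS hq).1, (hS hq).1⟩, ⟨hab, hab⟩]
    · exact List.pairwise_map.2 (hsort.imp_of_mem fun hq hq' hqq' =>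
        ⟨hσ ((Finset.mem_sort _).1 hq) ((Finset.mem_sort _).1 hq') hqq', hqq'⟩)
    · simp only [List.mem_map, Finset.mem_sort, List.mem_singleton]
      rintro _ ⟨q, hq, rfl⟩ _ rfl
      exact ⟨(hσS hq).2, (hS hq).2⟩
  have hends : ∀ c ∈ [a, b], pwLinear L c = c := by
    simp only [List.mem_cons, List.not_mem_nil, or_false]
    rintro c (rfl | rfl) <;> exact pwLinear_fst hL (c, c) (by simp [L])
  have hmono := pwLinear_strictMono hL
  refine ⟨pwLinear L, ⟨(pwLinear_continuous hL).continuousOn, hmono.strictMonoOn _,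
    hends a (by simp), hends b (by simp), fun t ht => ?_⟩, fun t ht => ?_, fun q hq => ?_⟩
  · exact ⟨(hends a (by simp)).symm.trans_le (hmono.monotone ht.1),
      (hmono.monotone ht.2).trans_eq (hends b (by simp))⟩
  · refine abs_pwLinear_sub_le hL (fun p hp => ?_) t ht.1
    simp only [List.mem_cons, List.mem_append, List.mem_map, Finset.mem_sort, List.not_mem_nil,
      or_false] at hp
    rcases hp with rfl | ⟨q, hq, rfl⟩ | rfl
    · simpa using hδ
    · exact hσδ q hq
    · simpa using hδ
  · exact pwLinear_fst hL (σ q, q) (by simp [L, hq])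

lemma exists_timeChange_matching (hab : a < b) {δ : ℝ} (hδ : 0 ≤ δ) {l₁ l₂ : ℝ → ℝ}
    (hl₁ : TimeChange a b l₁) (hl₂ : TimeChange a b l₂) (hl₁δ : ∀ t ∈ Icc a b, |l₁ t - t| ≤ δ)
    (hl₂δ : ∀ t ∈ Icc a b, |l₂ t - t| ≤ δ) {J₁ J₂ : Set ℝ} (hJ : (J₁ ∪ J₂).Finite)
    (hJab : J₁ ∪ J₂ ⊆ Icc a b) (hdisj : Disjoint J₁ J₂)
    (hgap : ∀ q ∈ J₁ ∪ J₂, ∀ q' ∈ J₁ ∪ J₂, q < q' → 2 * δ < q' - q) :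
    ∃ l, TimeChange a b l ∧ (∀ t ∈ Icc a b, |l t - t| ≤ δ) ∧
      (∀ q ∈ J₁, ∃ s ∈ Icc a b, l₁ s = q ∧ l s = q) ∧
      (∀ q ∈ J₂, ∃ s ∈ Icc a b, l₂ s = q ∧ l s = q) := by
  have hpre : ∀ q ∈ J₁ ∪ J₂, ∃ s ∈ Icc a b, |q - s| ≤ δ ∧ (q ∈ Ioo a b → s ∈ Ioo a b) ∧
      (q ∈ J₁ → l₁ s = q) ∧ (q ∈ J₂ → l₂ s = q) := by
    rintro q (hq | hq)
    · obtain ⟨s, hs, rfl⟩ := hl₁.surjOn hab.le (hJab (Or.inl hq))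
      exact ⟨s, hs, hl₁δ s hs, hl₁.mem_Ioo_of_apply_mem_Ioo hs, fun _ => rfl,
        fun h => absurd h (disjoint_left.1 hdisj hq)⟩
    · obtain ⟨s, hs, rfl⟩ := hl₂.surjOn hab.le (hJab (Or.inr hq))
      exact ⟨s, hs, hl₂δ s hs, hl₂.mem_Ioo_of_apply_mem_Ioo hs,
        fun h => absurd hq (disjoint_left.1 hdisj h), fun _ => rfl⟩
  choose! σ hσ hσδ hσIoo hσ₁ hσ₂ using hpre
  set S := (hJ.inter_of_left (Ioo a b)).toFinset
  have hS : ∀ q ∈ S, q ∈ J₁ ∪ J₂ ∧ q ∈ Ioo a b := fun q hq => by simpa [S] using hq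
  have hσmono : StrictMonoOn σ S := fun q hq q' hq' hqq' => by
    have h := hgap q (hS q hq).1 q' (hS q' hq').1 hqq'
    have h₁ := abs_le.1 (hσδ q (hS q hq).1)
    have h₂ := abs_le.1 (hσδ q' (hS q' hq').1)
    linarith
  obtain ⟨l, hl, hlδ, hlσ⟩ := exists_timeChange_of_nodes hab (fun q hq => (hS q hq).2)
    (fun q hq => hσIoo q (hS q hq).1 (hS q hq).2) hσmono hδ (fun q hq => hσδ q (hS q hq).1)
  have hmatch : ∀ q ∈ J₁ ∪ J₂, ∀ {l'}, TimeChange a b l' → (q ∈ Ioo a b → l' (σ q) = q) →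
      ∃ s ∈ Icc a b, l' s = q ∧ l s = q := by
    intro q hq l' hl' hl'σ
    by_cases hq' : q ∈ Ioo a b
    · exact ⟨σ q, hσ q hq, hl'σ hq', hlσ q (by simpa [S] using ⟨hq, hq'⟩)⟩
    · exact ⟨q, hJab hq, hl'.apply_eq_self_of_notMem_Ioo (hJab hq) hq',
        hl.apply_eq_self_of_notMem_Ioo (hJab hq) hq'⟩
  exact ⟨l, hl, hlδ, fun q hq => hmatch q (Or.inl hq) hl₁ fun _ => hσ₁ q (Or.inl hq) hq,
    fun q hq => hmatch q (Or.inr hq) hl₂ fun _ => hσ₂ q (Or.inr hq) hq⟩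

end Matching

lemma Set.Finite.exists_pos_le_sub {S : Set ℝ} (hS : S.Finite) :
    ∃ ρ > 0, ∀ q ∈ S, ∀ q' ∈ S, q < q' → ρ ≤ q' - q := by
  have h : ∀ᶠ ρ in 𝓝[>] (0 : ℝ), 0 < ρ ∧ ∀ q ∈ S, ∀ q' ∈ S, q < q' → ρ ≤ q' - q := by
    refine eventually_mem_nhdsWithin.and <| (eventually_all_finite hS).2 fun q _ =>
      (eventually_all_finite hS).2 fun q' _ => ?_
    by_cases hqq' : q < q'
    · filter_upwards [nhdsWithin_le_nhds (Iic_mem_nhds (sub_pos.2 hqq'))] with ρ hρ _ using hρ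
    · exact Eventually.of_forall fun _ h => absurd h hqq'
  exact h.exists

lemma exists_J1dist_add_lt {a b : ℝ} (hab : a < b) {x y : ℝ → ℝ} (hx : CadlagOn a b x)
    (hy : CadlagOn a b y) (hdisj : Disjoint (DiscOn a b x) (DiscOn a b y)) {ε : ℝ} (hε : 0 < ε) :
    ∃ δ > 0, ∀ u v : ℝ → ℝ, CadlagOn a b u → CadlagOn a b v → J1dist a b u x < δ →
      J1dist a b v y < δ → J1dist a b (fun t => u t + v t) (fun t => x t + y t) < ε := by
  -- with `δ ≤ ε / 8` the final estimate is `2 * δ + 6 * η ≤ ε / 2`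
  set η := ε / 24 with hηε
  have hη : 0 < η := by positivity
  obtain ⟨δx, hδx, hoscx⟩ := hx.exists_abs_sub_le_of_disjoint_largeJumps hη
  obtain ⟨δy, hδy, hoscy⟩ := hy.exists_abs_sub_le_of_disjoint_largeJumps hη
  have hfin := (hx.finite_largeJumps hη).union (hy.finite_largeJumps hη)
  obtain ⟨ρ, hρ, hgap⟩ := hfin.exists_pos_le_sub
  set δ := min (min (ε / 8) (ρ / 3)) (min (δx / 3) (δy / 3))
  have hδε : δ ≤ ε / 8 := (min_le_left _ _).trans (min_le_left _ _)
  have hδρ : δ ≤ ρ / 3 := (min_le_left _ _).trans (min_le_right _ _)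
  have hδx' : δ ≤ δx / 3 := (min_le_right _ _).trans (min_le_left _ _)
  have hδy' : δ ≤ δy / 3 := (min_le_right _ _).trans (min_le_right _ _)
  refine ⟨δ, by positivity, fun u v hu hv hux hvy => ?_⟩
  obtain ⟨lx, hlx, hlxδ⟩ := exists_timeChange_of_J1dist_lt hu.exists_abs_le hx.exists_abs_le hux
  obtain ⟨ly, hly, hlyδ⟩ := exists_timeChange_of_J1dist_lt hv.exists_abs_le hy.exists_abs_le hvy
  obtain ⟨l, hl, hlδ, hlxl, hlyl⟩ := exists_timeChange_matching hab (by positivity) hlx hly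
    (fun t ht => (hlxδ t ht).1) (fun t ht => (hlyδ t ht).1) hfin
    (union_subset (fun q hq => Ioc_subset_Icc_self hq.1) fun q hq => Ioc_subset_Icc_self hq.1)
    (hdisj.mono (hx.largeJumps_subset_discOn hη) (hy.largeJumps_subset_discOn hη))
    (fun q hq q' hq' hqq' => by linarith [hgap q hq q' hq' hqq'])
  refine (J1dist_le (by positivity) hl fun t ht => ⟨(hlδ t ht).trans (by linarith), ?_⟩).trans_lt
    (half_lt_self hε)
  have hx' : |x (lx t) - x (l t)| ≤ 3 * η := hoscx _ (hlx.2.2.2.2 ht) _ (hl.2.2.2.2 ht)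
    (by linarith [abs_sub_le (lx t) t (l t), (hlxδ t ht).1, hlδ t ht, abs_sub_comm t (l t)])
    (hlx.disjoint_uIoc hl hlxl ht)
  have hy' : |y (ly t) - y (l t)| ≤ 3 * η := hoscy _ (hly.2.2.2.2 ht) _ (hl.2.2.2.2 ht)
    (by linarith [abs_sub_le (ly t) t (l t), (hlyδ t ht).1, hlδ t ht, abs_sub_comm t (l t)])
    (hly.disjoint_uIoc hl hlyl ht)
  calc |u t + v t - (x (l t) + y (l t))|
      = |(u t - x (lx t) + (x (lx t) - x (l t))) + (v t - y (ly t) + (y (ly t) - y (l t)))| := by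
        congr 1; ring
    _ ≤ |u t - x (lx t)| + |x (lx t) - x (l t)| + (|v t - y (ly t)| + |y (ly t) - y (l t)|) :=
        (abs_add_le _ _).trans (add_le_add (abs_add_le _ _) (abs_add_le _ _))
    _ ≤ ε / 2 := by linarith [(hlxδ t ht).2, (hlyδ t ht).2]

/-- Continuity of addition in the `J_1` topology at pairs of càdlàg functions with disjoint
sets of discontinuities (Whitt 1980, Theorem 4.1). -/
theorem stmt9 (a b : ℝ) (hab : a < b) (x y : ℝ → ℝ) (xs ys : ℕ → ℝ → ℝ)
    (hx : CadlagOn a b x) (hy : CadlagOn a b y)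
    (hxs : ∀ n, CadlagOn a b (xs n)) (hys : ∀ n, CadlagOn a b (ys n))
    (hconvx : Tendsto (fun n => J1dist a b (xs n) x) atTop (nhds 0))
    (hconvy : Tendsto (fun n => J1dist a b (ys n) y) atTop (nhds 0))
    (hdisj : DiscOn a b x ∩ DiscOn a b y = ∅) :
    Tendsto (fun n => J1dist a b (fun t => xs n t + ys n t) (fun t => x t + y t))
      atTop (nhds 0) := by
  refine tendsto_order.2 ⟨fun c hc => .of_forall fun _ => hc.trans_le J1dist_nonneg,
    fun ε hε => ?_⟩
  obtain ⟨δ, hδ, h⟩ := exists_J1dist_add_lt hab hx hy (disjoint_iff_inter_eq_empty.2 hdisj) hε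
  filter_upwards [hconvx.eventually (gt_mem_nhds hδ), hconvy.eventually (gt_mem_nhds hδ)]
    with n hnx hny
  exact h _ _ (hxs n) (hys n) hnx hny
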